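/- Let A and B be bounded linear operators on a complex Hilbert space H. Then ‖A + B‖ ≤ 2∫₀¹ ω([[O, (1−t)A + tB],[(1−t)B* + tA*, O]]) dt ≤ ‖A‖ + ‖B‖. -/

import Mathlib

/-!
For `z = (x, y)` one has `⟨[[O, X], [Y, O]] z, z⟩ = ⟨X y, x⟩ + ⟨Y x, y⟩`, whose real part is
`Re ⟨(X + Y*) y, x⟩`. Taking `x` parallel to `(X + Y*) y` with `‖x‖ = ‖y‖` gives
`‖X + Y*‖ ≤ 2 ω([[O, X], [Y, O]])`, while Cauchy–Schwarz and AM–GM give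
`ω([[O, X], [Y, O]]) ≤ (‖X‖ + ‖Y‖) / 2`. Along `X = (1-t)A + tB`, `Y = (1-t)B* + tA*` we have
`X + Y* = A + B` and `‖X‖ + ‖Y‖ ≤ ‖A‖ + ‖B‖`, so both bounds hold for every `t ∈ [0, 1]`; the
integrand is continuous since `ω` is `1`-Lipschitz, and integrating over `[0, 1]` finishes.
-/

open ContinuousLinearMap

/-- The numerical radius of a bounded operator on a complex inner product space:
`ω(T) = sup { |⟨Tx, x⟩| : ‖x‖ = 1 }`. -/
noncomputable def numRadius {E : Type*} [NormedAddCommGroup E] [InnerProductSpace ℂ E]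
    (T : E →L[ℂ] E) : ℝ :=
  ⨆ x : { x : E // ‖x‖ = 1 }, ‖(inner ℂ (T x) (x : E) : ℂ)‖

/-- The block operator `[[O, A], [B, O]]` on the Hilbert space direct sum `H ⊕₂ H`,
sending `(x, y)` to `(A y, B x)`. -/
noncomputable def blockOp {H : Type*} [NormedAddCommGroup H] [InnerProductSpace ℂ H]
    (A B : H →L[ℂ] H) : WithLp 2 (H × H) →L[ℂ] WithLp 2 (H × H) :=
  ((WithLp.prodContinuousLinearEquiv 2 ℂ H H).symm : (H × H) →L[ℂ] WithLp 2 (H × H)) ∘L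
    ((A ∘L ContinuousLinearMap.snd ℂ H H).prod (B ∘L ContinuousLinearMap.fst ℂ H H)) ∘L
    ((WithLp.prodContinuousLinearEquiv 2 ℂ H H) : WithLp 2 (H × H) →L[ℂ] H × H)

lemma norm_ofReal_smul_add_ofReal_smul_le {E : Type*} [SeminormedAddCommGroup E] [NormedSpace ℂ E]
    {s t : ℝ} (hs : 0 ≤ s) (ht : 0 ≤ t) (a b : E) :
    ‖(s : ℂ) • a + (t : ℂ) • b‖ ≤ s * ‖a‖ + t * ‖b‖ :=
  calc ‖(s : ℂ) • a + (t : ℂ) • b‖ ≤ ‖(s : ℂ) • a‖ + ‖(t : ℂ) • b‖ := norm_add_le _ _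
    _ = s * ‖a‖ + t * ‖b‖ := by
      rw [norm_smul, norm_smul, Complex.norm_real, Complex.norm_real, Real.norm_of_nonneg hs,
        Real.norm_of_nonneg ht]

section NumRadius

variable {E : Type*} [NormedAddCommGroup E] [InnerProductSpace ℂ E]

lemma norm_inner_apply_self_le (T : E →L[ℂ] E) (x : E) :
    ‖(inner ℂ (T x) x : ℂ)‖ ≤ ‖T‖ * ‖x‖ ^ 2 :=
  calc ‖(inner ℂ (T x) x : ℂ)‖ ≤ ‖T x‖ * ‖x‖ := norm_inner_le_norm _ _
    _ ≤ ‖T‖ * ‖x‖ * ‖x‖ := by gcongr; exact T.le_opNorm x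
    _ = ‖T‖ * ‖x‖ ^ 2 := by ring

lemma numRadius_bddAbove (T : E →L[ℂ] E) :
    BddAbove (Set.range fun x : { x : E // ‖x‖ = 1 } => ‖(inner ℂ (T x) (x : E) : ℂ)‖) := by
  refine ⟨‖T‖, ?_⟩
  rintro _ ⟨x, rfl⟩
  simpa [x.2] using norm_inner_apply_self_le T x

lemma numRadius_nonneg (T : E →L[ℂ] E) : 0 ≤ numRadius T :=
  Real.iSup_nonneg fun _ => norm_nonneg _

lemma norm_inner_apply_self_le_numRadius (T : E →L[ℂ] E) {x : E} (hx : ‖x‖ = 1) :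
    ‖(inner ℂ (T x) x : ℂ)‖ ≤ numRadius T :=
  le_ciSup (numRadius_bddAbove T) (⟨x, hx⟩ : { x : E // ‖x‖ = 1 })

lemma numRadius_le {T : E →L[ℂ] E} {c : ℝ} (hc : 0 ≤ c)
    (h : ∀ x : E, ‖x‖ = 1 → ‖(inner ℂ (T x) x : ℂ)‖ ≤ c) : numRadius T ≤ c :=
  Real.iSup_le (fun x => h x x.2) hc

lemma norm_inner_apply_self_le_numRadius_mul_sq (T : E →L[ℂ] E) (x : E) :
    ‖(inner ℂ (T x) x : ℂ)‖ ≤ numRadius T * ‖x‖ ^ 2 := by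
  rcases eq_or_ne x 0 with rfl | hx
  · simp
  set u : E := ((‖x‖⁻¹ : ℝ) : ℂ) • x
  have hu : ‖u‖ = 1 := by
    rw [norm_smul, Complex.norm_real, Real.norm_eq_abs, abs_inv, abs_norm,
      inv_mul_cancel₀ (norm_ne_zero_iff.mpr hx)]
  have hxu : x = ((‖x‖ : ℝ) : ℂ) • u := by
    rw [smul_smul, ← Complex.ofReal_mul, mul_inv_cancel₀ (norm_ne_zero_iff.mpr hx),
      Complex.ofReal_one, one_smul]
  have hinner : ‖(inner ℂ (T x) x : ℂ)‖ = ‖x‖ ^ 2 * ‖(inner ℂ (T u) u : ℂ)‖ := by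
    conv_lhs => rw [hxu]
    rw [map_smul, inner_smul_left, inner_smul_right, Complex.conj_ofReal, ← mul_assoc,
      norm_mul, ← Complex.ofReal_mul, Complex.norm_real, Real.norm_eq_abs, abs_mul_self, sq]
  rw [hinner, mul_comm]
  gcongr
  exact norm_inner_apply_self_le_numRadius T hu

lemma numRadius_le_add_norm_sub (S T : E →L[ℂ] E) : numRadius S ≤ numRadius T + ‖S - T‖ := by
  refine numRadius_le (add_nonneg (numRadius_nonneg T) (norm_nonneg _)) fun x hx => ?_
  have hS : S x = T x + (S - T) x := by simp
  calc ‖(inner ℂ (S x) x : ℂ)‖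
      ≤ ‖(inner ℂ (T x) x : ℂ)‖ + ‖(inner ℂ ((S - T) x) x : ℂ)‖ := by
        rw [hS, inner_add_left]; exact norm_add_le _ _
    _ ≤ numRadius T + ‖S - T‖ := by
        gcongr
        · exact norm_inner_apply_self_le_numRadius T hx
        · simpa [hx] using norm_inner_apply_self_le (S - T) x

lemma lipschitzWith_one_numRadius : LipschitzWith 1 (numRadius (E := E)) := by
  refine LipschitzWith.of_dist_le_mul fun S T => ?_
  rw [NNReal.coe_one, one_mul, dist_eq_norm, dist_eq_norm, Real.norm_eq_abs, abs_sub_le_iff]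
  have hST := numRadius_le_add_norm_sub S T
  have hTS := numRadius_le_add_norm_sub T S
  rw [norm_sub_rev] at hTS
  constructor <;> linarith

end NumRadius

section BlockOp

variable {H : Type*} [NormedAddCommGroup H] [InnerProductSpace ℂ H]

lemma inner_blockOp_apply_self (A B : H →L[ℂ] H) (z : WithLp 2 (H × H)) :
    (inner ℂ (blockOp A B z) z : ℂ) = inner ℂ (A z.snd) z.fst + inner ℂ (B z.fst) z.snd :=
  rfl

lemma blockOp_add (A A' B B' : H →L[ℂ] H) :
    blockOp (A + A') (B + B') = blockOp A B + blockOp A' B' :=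
  rfl

lemma blockOp_smul (c : ℂ) (A B : H →L[ℂ] H) : blockOp (c • A) (c • B) = c • blockOp A B :=
  rfl

lemma numRadius_blockOp_le (A B : H →L[ℂ] H) :
    numRadius (blockOp A B) ≤ (‖A‖ + ‖B‖) / 2 := by
  refine numRadius_le (by positivity) fun z hz => ?_
  have hz' : ‖z.fst‖ ^ 2 + ‖z.snd‖ ^ 2 = 1 := by
    rw [← WithLp.prod_norm_sq_eq_of_L2, hz, one_pow]
  rw [inner_blockOp_apply_self]
  calc ‖(inner ℂ (A z.snd) z.fst : ℂ) + (inner ℂ (B z.fst) z.snd : ℂ)‖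
      ≤ ‖A z.snd‖ * ‖z.fst‖ + ‖B z.fst‖ * ‖z.snd‖ :=
        (norm_add_le _ _).trans (add_le_add (norm_inner_le_norm _ _) (norm_inner_le_norm _ _))
    _ ≤ ‖A‖ * ‖z.snd‖ * ‖z.fst‖ + ‖B‖ * ‖z.fst‖ * ‖z.snd‖ := by
        gcongr <;> exact le_opNorm _ _
    _ = (‖A‖ + ‖B‖) * (‖z.fst‖ * ‖z.snd‖) := by ring
    _ ≤ (‖A‖ + ‖B‖) / 2 := by
        have := two_mul_le_add_sq ‖z.fst‖ ‖z.snd‖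
        have : 0 ≤ ‖A‖ + ‖B‖ := by positivity
        nlinarith

lemma continuous_numRadius_blockOp_segment (A B C D : H →L[ℂ] H) :
    Continuous fun t : ℝ => numRadius (blockOp (((1 - t : ℝ) : ℂ) • A + ((t : ℝ) : ℂ) • B)
      (((1 - t : ℝ) : ℂ) • C + ((t : ℝ) : ℂ) • D)) := by
  simp only [blockOp_add, blockOp_smul]
  exact lipschitzWith_one_numRadius.continuous.comp (by fun_prop)

variable [CompleteSpace H]

lemma re_inner_add_adjoint_apply_le (A B : H →L[ℂ] H) (x y : H) :
    (inner ℂ ((A + adjoint B) y) x : ℂ).re ≤ numRadius (blockOp A B) * (‖x‖ ^ 2 + ‖y‖ ^ 2) := by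
  set z : WithLp 2 (H × H) := WithLp.toLp 2 (x, y)
  have hre : (inner ℂ ((A + adjoint B) y) x : ℂ).re = (inner ℂ (blockOp A B z) z : ℂ).re := by
    rw [inner_blockOp_apply_self, add_apply, inner_add_left, Complex.add_re, Complex.add_re,
      adjoint_inner_left, ← inner_conj_symm y (B x), Complex.conj_re]
    rfl
  have hz : ‖z‖ ^ 2 = ‖x‖ ^ 2 + ‖y‖ ^ 2 := WithLp.prod_norm_sq_eq_of_L2 z
  rw [hre, ← hz]
  exact (Complex.re_le_norm _).trans (norm_inner_apply_self_le_numRadius_mul_sq _ z)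

lemma norm_add_adjoint_le_two_mul_numRadius_blockOp (A B : H →L[ℂ] H) :
    ‖A + adjoint B‖ ≤ 2 * numRadius (blockOp A B) := by
  set C := A + adjoint B with hC
  refine opNorm_le_bound _ (by linarith [numRadius_nonneg (blockOp A B)]) fun y => ?_
  rcases eq_or_ne (C y) 0 with h0 | h0
  · rw [h0, norm_zero]
    exact mul_nonneg (mul_nonneg zero_le_two (numRadius_nonneg _)) (norm_nonneg y)
  have hCy : 0 < ‖C y‖ := norm_pos_iff.mpr h0
  have hy : 0 < ‖y‖ := norm_pos_iff.mpr fun hy => h0 (by rw [hy, map_zero])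
  -- pair `y` with the multiple of `C y` of the same norm
  set r : ℝ := ‖y‖ / ‖C y‖
  have hr : r * ‖C y‖ = ‖y‖ := div_mul_cancel₀ _ hCy.ne'
  have key := re_inner_add_adjoint_apply_le A B ((r : ℂ) • C y) y
  rw [inner_smul_right, Complex.re_ofReal_mul, ← RCLike.re_to_complex, inner_self_eq_norm_sq,
    norm_smul, Complex.norm_real, Real.norm_eq_abs, abs_of_nonneg (by positivity), mul_pow,
    ← hC] at key
  have hlhs : r * ‖C y‖ ^ 2 = ‖y‖ * ‖C y‖ := by rw [sq, ← mul_assoc, hr]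
  have hrhs : r ^ 2 * ‖C y‖ ^ 2 = ‖y‖ ^ 2 := by rw [← mul_pow, hr]
  rw [hlhs, hrhs] at key
  refine le_of_mul_le_mul_left ?_ hy
  linarith

lemma ofReal_smul_add_ofReal_smul_add_adjoint_swap (A B : H →L[ℂ] H) {s t : ℝ} (hst : s + t = 1) :
    (s : ℂ) • A + (t : ℂ) • B + adjoint ((s : ℂ) • adjoint B + (t : ℂ) • adjoint A) = A + B := by
  rw [map_add, map_smulₛₗ, map_smulₛₗ, adjoint_adjoint, adjoint_adjoint, Complex.conj_ofReal,
    Complex.conj_ofReal, ← one_smul ℂ (A + B), ← Complex.ofReal_one, ← hst, Complex.ofReal_add]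
  module

end BlockOp

/-- `‖A+B‖ ≤ 2∫₀¹ ω([[O,(1−t)A+tB],[(1−t)B*+tA*,O]]) dt ≤ ‖A‖+‖B‖`. -/
theorem stmt_14 {H : Type*} [NormedAddCommGroup H] [InnerProductSpace ℂ H] [CompleteSpace H]
    (A B : H →L[ℂ] H) :
    ‖A + B‖ ≤
        2 * ∫ t in (0:ℝ)..1,
          numRadius
            (blockOp (((1 - t : ℝ) : ℂ) • A + ((t : ℝ) : ℂ) • B)
              (((1 - t : ℝ) : ℂ) • adjoint B + ((t : ℝ) : ℂ) • adjoint A)) ∧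
      ((2 : ℝ) * ∫ t in (0:ℝ)..1,
          numRadius
            (blockOp (((1 - t : ℝ) : ℂ) • A + ((t : ℝ) : ℂ) • B)
              (((1 - t : ℝ) : ℂ) • adjoint B + ((t : ℝ) : ℂ) • adjoint A))) ≤
        ‖A‖ + ‖B‖ := by
  set ω : ℝ → ℝ := fun t => numRadius (blockOp (((1 - t : ℝ) : ℂ) • A + ((t : ℝ) : ℂ) • B)
    (((1 - t : ℝ) : ℂ) • adjoint B + ((t : ℝ) : ℂ) • adjoint A))
  have hlower (t : ℝ) : ‖A + B‖ / 2 ≤ ω t := by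
    have h := norm_add_adjoint_le_two_mul_numRadius_blockOp
      (((1 - t : ℝ) : ℂ) • A + ((t : ℝ) : ℂ) • B)
      (((1 - t : ℝ) : ℂ) • adjoint B + ((t : ℝ) : ℂ) • adjoint A)
    rw [ofReal_smul_add_ofReal_smul_add_adjoint_swap A B (sub_add_cancel 1 t)] at h
    linarith
  have hupper : ∀ t ∈ Set.Icc (0 : ℝ) 1, ω t ≤ (‖A‖ + ‖B‖) / 2 := by
    rintro t ⟨ht₀, ht₁⟩
    have hA := norm_ofReal_smul_add_ofReal_smul_le (sub_nonneg.2 ht₁) ht₀ A B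
    have hB := norm_ofReal_smul_add_ofReal_smul_le (sub_nonneg.2 ht₁) ht₀ (adjoint B) (adjoint A)
    rw [adjoint.norm_map, adjoint.norm_map] at hB
    refine (numRadius_blockOp_le _ _).trans ?_
    linarith
  have hω : Continuous ω := continuous_numRadius_blockOp_segment A B (adjoint B) (adjoint A)
  have hconst (c : ℝ) : ∫ _ in (0 : ℝ)..1, c = c := by simp
  constructor
  · calc ‖A + B‖ = 2 * ∫ _ in (0 : ℝ)..1, ‖A + B‖ / 2 := by rw [hconst]; ring
      _ ≤ 2 * ∫ t in (0 : ℝ)..1, ω t := by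
        gcongr
        exact intervalIntegral.integral_mono_on zero_le_one intervalIntegrable_const
          (hω.intervalIntegrable 0 1) fun t _ => hlower t
  · calc 2 * ∫ t in (0 : ℝ)..1, ω t ≤ 2 * ∫ _ in (0 : ℝ)..1, (‖A‖ + ‖B‖) / 2 := by
          gcongr
          exact intervalIntegral.integral_mono_on zero_le_one (hω.intervalIntegrable 0 1)
            intervalIntegrable_const hupper
      _ = ‖A‖ + ‖B‖ := by rw [hconst]; ring
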